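/- arXiv:0905.1861 — 2 statements merged into one kernel-verified Lean document; each statement's English description precedes it below -/
import Mathlib

section
/- Let Ω ⊆ ℍ be an axially symmetric s-domain, let f, g : Ω → ℍ be slice regular, and let f∗g denote their regular product. Then for q ∈ Ω, (f∗g)(q) = 0 if and only if f(q) = 0, or f(q) ≠ 0 and g(f(q)⁻¹·q·f(q)) = 0. -/
open Quaternion

noncomputable section

/-- The 2-sphere of imaginary units in the quaternions. -/
def SpH : Set ℍ[ℝ] := {q | q.re = 0 ∧ ‖q‖ = 1}

/-- The slice (complex plane) `L_I = {x + y I : x, y ∈ ℝ}`. -/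
def sliceL (I : ℍ[ℝ]) : Set ℍ[ℝ] := {q | ∃ x y : ℝ, q = (x : ℍ[ℝ]) + y • I}

/-- `f` has continuous partial derivatives on the `I`-slice part of `Ω` and satisfies the
Cauchy–Riemann equation `∂f/∂x + I ∂f/∂y = 0` there. -/
def SliceHolomorphicOn (I : ℍ[ℝ]) (f : ℍ[ℝ] → ℍ[ℝ]) (Ω : Set ℍ[ℝ]) : Prop :=
  ∃ fx fy : ℝ → ℝ → ℍ[ℝ],
    (∀ x y : ℝ, (x : ℍ[ℝ]) + y • I ∈ Ω →
      HasDerivAt (fun t : ℝ => f ((t : ℍ[ℝ]) + y • I)) (fx x y) x) ∧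
    (∀ x y : ℝ, (x : ℍ[ℝ]) + y • I ∈ Ω →
      HasDerivAt (fun t : ℝ => f ((x : ℍ[ℝ]) + t • I)) (fy x y) y) ∧
    ContinuousOn (fun p : ℝ × ℝ => fx p.1 p.2) {p : ℝ × ℝ | (p.1 : ℍ[ℝ]) + p.2 • I ∈ Ω} ∧
    ContinuousOn (fun p : ℝ × ℝ => fy p.1 p.2) {p : ℝ × ℝ | (p.1 : ℍ[ℝ]) + p.2 • I ∈ Ω} ∧
    ∀ x y : ℝ, (x : ℍ[ℝ]) + y • I ∈ Ω → fx x y + I * fy x y = 0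

/-- `f` is slice regular on `Ω`. -/
def SliceRegularOn (f : ℍ[ℝ] → ℍ[ℝ]) (Ω : Set ℍ[ℝ]) : Prop :=
  ∀ I ∈ SpH, SliceHolomorphicOn I f Ω

/-- `Ω` is axially symmetric. -/
def AxSymm (Ω : Set ℍ[ℝ]) : Prop :=
  ∀ (x y : ℝ), ∀ I ∈ SpH, (x : ℍ[ℝ]) + y • I ∈ Ω → ∀ J ∈ SpH, (x : ℍ[ℝ]) + y • J ∈ Ω

/-- `Ω` is an s-domain: a domain meeting the real axis whose slices are connected. -/
def IsSDomain (Ω : Set ℍ[ℝ]) : Prop :=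
  IsOpen Ω ∧ IsConnected Ω ∧ (∃ x : ℝ, (x : ℍ[ℝ]) ∈ Ω) ∧
    ∀ I ∈ SpH, IsConnected (Ω ∩ sliceL I)

/-- The axially symmetric completion of a set `S ⊆ ℍ`. -/
def symmComp (S : Set ℍ[ℝ]) : Set ℍ[ℝ] :=
  {q | ∃ (x y : ℝ) (I : ℍ[ℝ]), I ∈ SpH ∧ q = (x : ℍ[ℝ]) + y • I ∧
    ∃ J ∈ SpH, (x : ℍ[ℝ]) + y • J ∈ S}

/-- A domain of the slice `L_I`: a nonempty connected relatively open subset of `L_I`. -/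
def IsSliceDomain (I : ℍ[ℝ]) (D : Set ℍ[ℝ]) : Prop :=
  D ⊆ sliceL I ∧ IsConnected D ∧ IsOpen {p : ℝ × ℝ | (p.1 : ℍ[ℝ]) + p.2 • I ∈ D}


/-!
Write `q = x + yL` with `L ∈ 𝕊` and put `z = x + yI`. Every slice regular `h` on an axially
symmetric s-domain satisfies the representation formula
`2 h(x + yL) = (1 - LI) h(z) + (1 + LI) h(z̄)`: both sides are holomorphic functions of `x + yL`
on the slice `L_L` that agree on the real axis. On `L_I` the definition of the regular product
reads `(f∗g)(z) = F(z) g(z) + G(z) J g(z̄)`, that is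
`2 (f∗g)(z) = f(z) (g(z) + g(z̄)) + I f(z) I (g(z̄) - g(z))`, and the representation formulas for
`f∗g` and `f` turn this into
`2 (f∗g)(q) = f(q) (g(z) + g(z̄)) + L f(q) I (g(z̄) - g(z))`.
The right-hand side vanishes when `f(q) = 0`. Otherwise `L' = f(q)⁻¹ L f(q) ∈ 𝕊` satisfies
`f(q) L' = L f(q)`, so by the representation formula for `g` at `x + yL' = f(q)⁻¹ q f(q)` the
right-hand side equals `2 f(q) g(f(q)⁻¹ q f(q))`.
-/

open Filter Topology ContinuousLinearMap

instance : NeZero (2 : ℍ[ℝ]) :=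
  ⟨fun h => two_ne_zero (α := ℝ) (congrArg (fun q : ℍ[ℝ] => q.re) h)⟩

section ImaginaryUnits

variable {I L : ℍ[ℝ]}

lemma star_eq_neg_of_mem_spH (hL : L ∈ SpH) : star L = -L :=
  Quaternion.star_eq_neg.2 hL.1

lemma mul_self_eq_neg_one_of_mem_spH (hL : L ∈ SpH) : L * L = -1 := by
  have h := Quaternion.star_mul_self L
  rw [star_eq_neg_of_mem_spH hL, Quaternion.normSq_eq_norm_mul_self, hL.2, neg_mul] at h
  simpa using congrArg Neg.neg h

lemma neg_mem_spH (hL : L ∈ SpH) : -L ∈ SpH :=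
  ⟨by simp [hL.1], by simpa using hL.2⟩

lemma inv_mul_mul_mem_spH (hL : L ∈ SpH) {A : ℍ[ℝ]} (hA : A ≠ 0) : A⁻¹ * L * A ∈ SpH := by
  refine ⟨?_, by simp [hL.2, hA]⟩
  have re_mul_comm (a b : ℍ[ℝ]) : (a * b).re = (b * a).re := by
    simp only [Quaternion.re_mul]; ring
  rw [re_mul_comm, ← mul_assoc, mul_inv_cancel₀ hA, one_mul, hL.1]

lemma norm_coe_add_smul (hL : L ∈ SpH) (x y : ℝ) :
    ‖(x : ℍ[ℝ]) + y • L‖ = ‖(⟨x, y⟩ : ℂ)‖ := by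
  have h1 := Quaternion.normSq_eq_norm_mul_self L
  have h2 := Quaternion.normSq_eq_norm_mul_self ((x : ℍ[ℝ]) + y • L)
  have hre : L.re = 0 := hL.1
  rw [hL.2, Quaternion.normSq_def', hre] at h1
  rw [Quaternion.normSq_def'] at h2
  simp only [re_add, re_coe, re_smul, hre, smul_eq_mul, mul_zero, add_zero, imI_add, imI_coe,
    imI_smul, zero_add, imJ_add, imJ_coe, imJ_smul, imK_add, imK_coe, imK_smul] at h2
  rw [← sq_eq_sq₀ (norm_nonneg _) (norm_nonneg _), Complex.sq_norm, Complex.normSq_mk]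
  linear_combination -h2 + y ^ 2 * h1

lemma exists_eq_coe_add_smul (hI : I ∈ SpH) (q : ℍ[ℝ]) :
    ∃ (x y : ℝ) (L : ℍ[ℝ]), L ∈ SpH ∧ q = x + y • L := by
  rcases eq_or_ne q.im 0 with h | h
  · exact ⟨q.re, 0, I, hI, by simpa [h] using (Quaternion.re_add_im q).symm⟩
  · have hn : ‖q.im‖ ≠ 0 := norm_ne_zero_iff.2 h
    refine ⟨q.re, ‖q.im‖, ‖q.im‖⁻¹ • q.im, ⟨by simp, by simp [norm_smul, hn]⟩, ?_⟩
    rw [smul_smul, mul_inv_cancel₀ hn, one_smul, Quaternion.re_add_im]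

lemma star_coe_add_smul (hI : I ∈ SpH) (x y : ℝ) :
    star ((x : ℍ[ℝ]) + y • I) = x + y • -I := by
  rw [star_add, Quaternion.star_coe, Quaternion.star_smul, star_eq_neg_of_mem_spH hI]

lemma mul_eq_neg_mul_of_re_mul_star_eq_zero (hI : I ∈ SpH) {J : ℍ[ℝ]} (hJ : J ∈ SpH)
    (h : (I * star J).re = 0) : J * I = -(I * J) := by
  rw [star_eq_neg_of_mem_spH hJ, mul_neg] at h
  replace h : (I * J).re = 0 := neg_eq_zero.1 h
  have hstar : star (I * J) = J * I := by
    rw [star_mul, star_eq_neg_of_mem_spH hI, star_eq_neg_of_mem_spH hJ, neg_mul_neg]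
  rw [← hstar, Quaternion.star_eq_two_re_sub, h]
  simp

lemma mul_eq_mul_of_mem_sliceL {X : ℍ[ℝ]} (hX : X ∈ sliceL I) : X * I = I * X := by
  obtain ⟨x, y, rfl⟩ := hX
  rw [add_mul, mul_add, smul_mul_assoc, mul_smul_comm, Quaternion.coe_mul_eq_smul,
    Quaternion.mul_coe_eq_smul]

lemma mul_eq_star_mul_of_mem_sliceL (hI : I ∈ SpH) {J : ℍ[ℝ]} (hIJ : J * I = -(I * J))
    {X : ℍ[ℝ]} (hX : X ∈ sliceL I) : J * X = star X * J := by
  obtain ⟨x, y, rfl⟩ := hX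
  rw [star_coe_add_smul hI, mul_add, add_mul, mul_smul_comm, smul_mul_assoc,
    Quaternion.mul_coe_eq_smul, Quaternion.coe_mul_eq_smul, hIJ, neg_mul]

end ImaginaryUnits

lemma hasFDerivAt_uncurry_of_partials {F : Type*} [NormedAddCommGroup F] [NormedSpace ℝ F]
    {v vx vy : ℝ → ℝ → F} {U : Set (ℝ × ℝ)} (hU : IsOpen U)
    (hvx : ∀ p ∈ U, HasDerivAt (fun t => v t p.2) (vx p.1 p.2) p.1)
    (hvy : ∀ p ∈ U, HasDerivAt (v p.1) (vy p.1 p.2) p.2)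
    (hcx : ContinuousOn (Function.uncurry vx) U) (hcy : ContinuousOn (Function.uncurry vy) U)
    {p : ℝ × ℝ} (hp : p ∈ U) :
    HasFDerivAt (Function.uncurry v)
      ((toSpanSingleton ℝ (vx p.1 p.2)).coprod (toSpanSingleton ℝ (vy p.1 p.2))) p := by
  have hpU : U ∈ 𝓝 p := hU.mem_nhds hp
  refine (hasStrictFDerivAt_uncurry_coprod (f₁ := fun x y => toSpanSingleton ℝ (vx x y))
    (f₂ := fun x y => toSpanSingleton ℝ (vy x y)) ?_ ?_ ?_ ?_).hasFDerivAt
  · filter_upwards [hpU] with q hq using (hvx q hq).hasFDerivAt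
  · filter_upwards [hpU] with q hq using (hvy q hq).hasFDerivAt
  · exact (toSpanSingletonCLE (𝕜 := ℝ)).continuous.continuousAt.comp (hcx.continuousAt hpU)
  · exact (toSpanSingletonCLE (𝕜 := ℝ)).continuous.continuousAt.comp (hcy.continuousAt hpU)

lemma frequently_ofReal_nhdsNE {P : ℂ → Prop} {x₀ : ℝ} (h : ∀ᶠ x : ℝ in 𝓝 x₀, P x) :
    ∃ᶠ z in 𝓝[≠] (x₀ : ℂ), P z := by
  have hlim : Tendsto ((↑) : ℝ → ℂ) (𝓝[≠] x₀) (𝓝[≠] (x₀ : ℂ)) :=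
    tendsto_nhdsWithin_of_tendsto_nhds_of_eventually_within _
      Complex.continuous_ofReal.continuousWithinAt
      (eventually_nhdsWithin_of_forall fun x hx => by simpa using hx)
  exact hlim.frequently (eventually_nhdsWithin_of_eventually_nhds h).frequently

/-- `SliceHolomorphicOn L` in the coordinates `(x, y) ↦ x + y L`. -/
def CauchyRiemannOn (L : ℍ[ℝ]) (v : ℝ → ℝ → ℍ[ℝ]) (U : Set (ℝ × ℝ)) : Prop :=
  ∃ vx vy : ℝ → ℝ → ℍ[ℝ],
    (∀ p ∈ U, HasDerivAt (fun t => v t p.2) (vx p.1 p.2) p.1) ∧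
    (∀ p ∈ U, HasDerivAt (v p.1) (vy p.1 p.2) p.2) ∧
    ContinuousOn (Function.uncurry vx) U ∧ ContinuousOn (Function.uncurry vy) U ∧
    ∀ p ∈ U, vx p.1 p.2 + L * vy p.1 p.2 = 0

namespace CauchyRiemannOn

variable {L : ℍ[ℝ]} {v w : ℝ → ℝ → ℍ[ℝ]} {U : Set (ℝ × ℝ)}

lemma sub (hv : CauchyRiemannOn L v U) (hw : CauchyRiemannOn L w U) :
    CauchyRiemannOn L (fun x y => v x y - w x y) U := by
  obtain ⟨vx, vy, hvx, hvy, hcvx, hcvy, hvcr⟩ := hv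
  obtain ⟨wx, wy, hwx, hwy, hcwx, hcwy, hwcr⟩ := hw
  refine ⟨vx - wx, vy - wy, fun p hp => (hvx p hp).sub (hwx p hp),
    fun p hp => (hvy p hp).sub (hwy p hp), hcvx.sub hcwx, hcvy.sub hcwy, fun p hp => ?_⟩
  simp only [Pi.sub_apply, mul_sub]
  rw [sub_add_sub_comm, hvcr p hp, hwcr p hp, sub_zero]

lemma const_mul {J : ℍ[ℝ]} (hv : CauchyRiemannOn J v U) {c : ℍ[ℝ]} (hc : L * c = c * J) :
    CauchyRiemannOn L (fun x y => c * v x y) U := by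
  obtain ⟨vx, vy, hvx, hvy, hcx, hcy, hcr⟩ := hv
  refine ⟨fun x y => c * vx x y, fun x y => c * vy x y, fun p hp => (hvx p hp).const_mul c,
    fun p hp => (hvy p hp).const_mul c, continuousOn_const.mul hcx, continuousOn_const.mul hcy,
    fun p hp => ?_⟩
  rw [← mul_assoc, hc, mul_assoc, ← mul_add, hcr p hp, mul_zero]

/-- Left multiplication by `x + y L` makes `ℍ` a normed `ℂ`-vector space, in which the
Cauchy–Riemann equation says that `x + y i ↦ v x y` is complex differentiable; this reduces the
claim to the identity theorem. -/
lemma eqOn_zero (hL : L ∈ SpH) (hv : CauchyRiemannOn L v U) (hU : IsOpen U)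
    (hUc : IsPreconnected U) {x₀ : ℝ} (hx₀ : (x₀, 0) ∈ U)
    (hv₀ : ∀ x : ℝ, (x, 0) ∈ U → v x 0 = 0) : Set.EqOn (Function.uncurry v) 0 U := by
  obtain ⟨vx, vy, hvx, hvy, hcx, hcy, hcr⟩ := hv
  let _ : Module ℂ ℍ[ℝ] :=
    Module.compHom ℍ[ℝ] (Complex.liftAux L (mul_self_eq_neg_one_of_mem_spH hL)).toRingHom
  have smul_def (z : ℂ) (q : ℍ[ℝ]) : z • q = ((z.re : ℍ[ℝ]) + z.im • L) * q := rfl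
  let _ : NormedSpace ℂ ℍ[ℝ] := ⟨fun z q => by rw [smul_def, norm_mul, norm_coe_add_smul hL]⟩
  let e := Complex.equivRealProdCLM
  have hd : DifferentiableOn ℂ (Function.uncurry v ∘ e) (e ⁻¹' U) := by
    intro z hz
    have hD := (hasFDerivAt_uncurry_of_partials hU hvx hvy hcx hcy hz).comp z e.hasFDerivAt
    have hvy_eq : vy z.re z.im = L * vx z.re z.im := by
      have h : vx z.re z.im = -(L * vy z.re z.im) :=
        eq_neg_of_add_eq_zero_left (by simpa [e] using hcr _ hz)
      rw [h, mul_neg, ← mul_assoc, mul_self_eq_neg_one_of_mem_spH hL, neg_one_mul, neg_neg]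
    refine (HasFDerivAt.of_isLittleO (f' := toSpanSingleton ℂ (vx z.re z.im))
      (hD.isLittleO.congr_left fun w => ?_)).differentiableAt.differentiableWithinAt
    simp only [Function.comp_apply, Complex.equivRealProdCLM_apply, Function.uncurry_apply_pair,
      hvy_eq, comp_apply, ContinuousLinearEquiv.coe_coe, Complex.sub_re, Complex.sub_im,
      coprod_apply, toSpanSingleton_apply, sub_smul, smul_def, coe_sub, add_mul, sub_right_inj, e]
    simp only [sub_mul, Quaternion.coe_mul_eq_smul, smul_mul_assoc]
  have hfreq : ∃ᶠ z in 𝓝[≠] (x₀ : ℂ), (Function.uncurry v ∘ e) z = 0 := by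
    refine frequently_ofReal_nhdsNE ?_
    have hreal : IsOpen {x : ℝ | (x, (0 : ℝ)) ∈ U} := hU.preimage (by fun_prop)
    filter_upwards [hreal.mem_nhds hx₀] with x hx using by simpa [e] using hv₀ x hx
  have hzero := (hd.analyticOnNhd (hU.preimage e.continuous)
    ).eqOn_zero_of_preconnected_of_frequently_eq_zero (e.toHomeomorph.isPreconnected_preimage.2 hUc)
    (show e (x₀ : ℂ) ∈ U by simpa [e] using hx₀) hfreq
  intro p hp
  simpa using hzero (show e (e.symm p) ∈ U by simpa using hp)

end CauchyRiemannOn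

def sliceCoords (L : ℍ[ℝ]) (Ω : Set ℍ[ℝ]) : Set (ℝ × ℝ) := {p | (p.1 : ℍ[ℝ]) + p.2 • L ∈ Ω}

section SliceCoords

variable {L : ℍ[ℝ]} {Ω : Set ℍ[ℝ]}

lemma SliceHolomorphicOn.cauchyRiemannOn {f : ℍ[ℝ] → ℍ[ℝ]} (hf : SliceHolomorphicOn L f Ω) :
    CauchyRiemannOn L (fun x y => f (x + y • L)) (sliceCoords L Ω) := by
  obtain ⟨fx, fy, hfx, hfy, hcx, hcy, hcr⟩ := hf
  exact ⟨fx, fy, fun p => hfx p.1 p.2, fun p => hfy p.1 p.2, hcx, hcy, fun p => hcr p.1 p.2⟩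

lemma isOpen_sliceCoords (hΩ : IsOpen Ω) : IsOpen (sliceCoords L Ω) :=
  hΩ.preimage ((Quaternion.continuous_coe.comp continuous_fst).add
    (continuous_snd.smul continuous_const))

lemma isPreconnected_sliceCoords (hL : L ∈ SpH) (hΩL : IsConnected (Ω ∩ sliceL L)) :
    IsPreconnected (sliceCoords L Ω) := by
  let φ : ℝ × ℝ →ₗ[ℝ] ℍ[ℝ] :=
    (LinearMap.fst ℝ ℝ ℝ).smulRight (1 : ℍ[ℝ]) + (LinearMap.snd ℝ ℝ ℝ).smulRight L
  have hφ (p : ℝ × ℝ) : φ p = (p.1 : ℍ[ℝ]) + p.2 • L := by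
    simp [φ, ← Quaternion.coe_mul_eq_smul]
  have hinj : LinearMap.ker φ = ⊥ := by
    refine LinearMap.ker_eq_bot'.2 fun p hp => ?_
    rw [hφ] at hp
    have h1 : p.1 = 0 := by simpa [hL.1] using congrArg QuaternionAlgebra.re hp
    have hL0 : L ≠ 0 := norm_ne_zero_iff.1 (by rw [hL.2]; exact one_ne_zero)
    rw [h1, Quaternion.coe_zero, zero_add, smul_eq_zero] at hp
    exact Prod.ext h1 (hp.resolve_right hL0)
  have himage : φ '' sliceCoords L Ω = Ω ∩ sliceL L := by
    ext q
    constructor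
    · rintro ⟨p, hp, rfl⟩
      exact ⟨by rwa [hφ], p.1, p.2, hφ p⟩
    · rintro ⟨hq, x, y, rfl⟩
      exact ⟨(x, y), hq, hφ (x, y)⟩
  rw [← (LinearMap.isClosedEmbedding_of_injective hinj).isInducing.isPreconnected_image, himage]
  exact hΩL.isPreconnected

lemma sliceCoords_eq_of_axSymm (hax : AxSymm Ω) (hL : L ∈ SpH) {J : ℍ[ℝ]} (hJ : J ∈ SpH) :
    sliceCoords J Ω = sliceCoords L Ω :=
  Set.ext fun _ => ⟨fun hp => hax _ _ J hJ hp L hL, fun hp => hax _ _ L hL hp J hJ⟩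

lemma star_mem_of_axSymm (hax : AxSymm Ω) (hL : L ∈ SpH) {z : ℍ[ℝ]}
    (hz : z ∈ Ω ∩ sliceL L) : star z ∈ Ω ∩ sliceL L := by
  obtain ⟨hzΩ, x, y, rfl⟩ := hz
  refine ⟨?_, x, -y, ?_⟩ <;> rw [star_coe_add_smul hL]
  · exact hax x y L hL hzΩ (-L) (neg_mem_spH hL)
  · rw [smul_neg, neg_smul]

end SliceCoords

theorem SliceRegularOn.two_mul_apply_eq {Ω : Set ℍ[ℝ]} {h : ℍ[ℝ] → ℍ[ℝ]}
    (hh : SliceRegularOn h Ω) (hΩ : IsSDomain Ω) (hax : AxSymm Ω) {J L : ℍ[ℝ]} (hJ : J ∈ SpH)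
    (hL : L ∈ SpH) {x y : ℝ} (hxy : (x : ℍ[ℝ]) + y • L ∈ Ω) :
    2 * h (x + y • L) = (1 - L * J) * h (x + y • J) + (1 + L * J) * h (x + y • -J) := by
  obtain ⟨hΩo, -, ⟨x₀, hx₀⟩, hΩc⟩ := hΩ
  have hLL (X : ℍ[ℝ]) : L * (L * X) = -X := by
    rw [← mul_assoc, mul_self_eq_neg_one_of_mem_spH hL, neg_one_mul]
  have hJJ (X : ℍ[ℝ]) : X * J * J = -X := by
    rw [mul_assoc, mul_self_eq_neg_one_of_mem_spH hJ, mul_neg_one]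
  have hCRJ := (hh J hJ).cauchyRiemannOn
  have hCRJ' := (hh (-J) (neg_mem_spH hJ)).cauchyRiemannOn
  rw [sliceCoords_eq_of_axSymm hax hL hJ] at hCRJ
  rw [sliceCoords_eq_of_axSymm hax hL (neg_mem_spH hJ)] at hCRJ'
  have hc₁ : L * (1 - L * J) = (1 - L * J) * J := by
    simp only [mul_sub, sub_mul, mul_one, one_mul, hLL, hJJ]; abel
  have hc₂ : L * (1 + L * J) = (1 + L * J) * -J := by
    simp only [mul_add, add_mul, mul_neg, mul_one, one_mul, hLL, hJJ]; abel
  have hCR := (((hh L hL).cauchyRiemannOn.const_mul (Commute.ofNat_right L 2).eq).sub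
    (hCRJ.const_mul hc₁)).sub (hCRJ'.const_mul hc₂)
  have := hCR.eqOn_zero hL (isOpen_sliceCoords hΩo) (isPreconnected_sliceCoords hL (hΩc L hL))
    (x₀ := x₀) (by simpa [sliceCoords] using hx₀)
    (fun x _ => by simp only [zero_smul, add_zero, smul_neg, neg_zero]; noncomm_ring)
    (show (x, y) ∈ sliceCoords L Ω from hxy)
  rwa [Function.uncurry_apply_pair, Pi.zero_apply, sub_sub, sub_eq_zero] at this

lemma two_mul_regularProduct_eq {I J : ℍ[ℝ]} (hI : I ∈ SpH) (hJ : J ∈ SpH)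
    (hIJ : J * I = -(I * J)) {F G H K H' K' : ℍ[ℝ]} (hF : F ∈ sliceL I) (hG : G ∈ sliceL I)
    (hH' : H' ∈ sliceL I) (hK' : K' ∈ sliceL I) :
    2 * ((F * H - G * star K') + (F * K + G * star H') * J) =
      (F + G * J) * ((H + K * J) + (H' + K' * J)) +
        I * (F + G * J) * I * ((H' + K' * J) - (H + K * J)) := by
  have hII := mul_self_eq_neg_one_of_mem_spH hI
  have hJg : J * (H' + K' * J) = star H' * J - star K' := by
    rw [mul_add, ← mul_assoc, mul_eq_star_mul_of_mem_sliceL hI hIJ hH',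
      mul_eq_star_mul_of_mem_sliceL hI hIJ hK', mul_assoc, mul_self_eq_neg_one_of_mem_spH hJ,
      mul_neg_one, sub_eq_add_neg]
  have hIF : I * F * I = -F := by
    rw [← mul_eq_mul_of_mem_sliceL hF, mul_assoc, hII, mul_neg_one]
  have hIG : I * (G * J) * I = G * J := by
    rw [← mul_assoc, ← mul_eq_mul_of_mem_sliceL hG, mul_assoc G, mul_assoc G, mul_assoc, hIJ,
      mul_neg, ← mul_assoc, hII, neg_one_mul, neg_neg]
  have hIf : I * (F + G * J) * I = -F + G * J := by rw [mul_add, add_mul, hIF, hIG]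
  rw [hIf]
  calc 2 * ((F * H - G * star K') + (F * K + G * star H') * J)
      = 2 * (F * (H + K * J) + G * (J * (H' + K' * J))) := by rw [hJg]; noncomm_ring
    _ = _ := by noncomm_ring

lemma slice_combination_identity {R : Type*} [Ring R] {i l : R} (hi : i * i = -1)
    (hl : l * l = -1) (u v a b : R) :
    (1 - l * i) * (u * (a + b) + i * u * i * (b - a)) +
        (1 + l * i) * (v * (b + a) + i * v * i * (a - b)) =
      ((1 - l * i) * u + (1 + l * i) * v) * (a + b) +
        l * ((1 - l * i) * u + (1 + l * i) * v) * i * (b - a) := by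
  have hi' (X : R) : i * (i * X) = -X := by rw [← mul_assoc, hi, neg_one_mul]
  have hl' (X : R) : l * (l * X) = -X := by rw [← mul_assoc, hl, neg_one_mul]
  simp only [mul_add, add_mul, mul_sub, sub_mul, one_mul, mul_assoc, hi', hl', mul_neg,
    neg_mul]
  abel

section RegularProduct

variable {Ω : Set ℍ[ℝ]} {I L : ℍ[ℝ]} {x y : ℝ}

lemma two_mul_apply_eq_of_forall_mem_sliceL (hΩ : IsSDomain Ω) (hax : AxSymm Ω)
    {f g fg : ℍ[ℝ] → ℍ[ℝ]} (hf : SliceRegularOn f Ω) (hfg : SliceRegularOn fg Ω)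
    (hI : I ∈ SpH) (hL : L ∈ SpH)
    (hslice : ∀ z ∈ Ω ∩ sliceL I,
      2 * fg z = f z * (g z + g (star z)) + I * f z * I * (g (star z) - g z))
    (hxy : (x : ℍ[ℝ]) + y • L ∈ Ω) :
    2 * fg (x + y • L) = f (x + y • L) * (g (x + y • I) + g (x + y • -I)) +
      L * f (x + y • L) * I * (g (x + y • -I) - g (x + y • I)) := by
  have hz : (x : ℍ[ℝ]) + y • I ∈ Ω ∩ sliceL I := ⟨hax x y L hL hxy I hI, x, y, rfl⟩
  have hz' : (x : ℍ[ℝ]) + y • -I ∈ Ω ∩ sliceL I := by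
    simpa only [star_coe_add_smul hI] using star_mem_of_axSymm hax hI hz
  have hstar : star ((x : ℍ[ℝ]) + y • -I) = x + y • I := by
    rw [← star_coe_add_smul hI, star_star]
  have h₁ := hslice _ hz
  have h₂ := hslice _ hz'
  rw [star_coe_add_smul hI] at h₁
  rw [hstar] at h₂
  refine mul_left_cancel₀ two_ne_zero ?_
  calc 2 * (2 * fg (x + y • L))
      = (1 - L * I) * (2 * fg (x + y • I)) + (1 + L * I) * (2 * fg (x + y • -I)) := by
        rw [hfg.two_mul_apply_eq hΩ hax hI hL hxy]; noncomm_ring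
    _ = _ := by
        rw [h₁, h₂, slice_combination_identity (mul_self_eq_neg_one_of_mem_spH hI)
          (mul_self_eq_neg_one_of_mem_spH hL), ← hf.two_mul_apply_eq hΩ hax hI hL hxy]
        noncomm_ring

lemma mul_two_mul_apply_inv_mul_mul (hΩ : IsSDomain Ω) (hax : AxSymm Ω) {g : ℍ[ℝ] → ℍ[ℝ]}
    (hg : SliceRegularOn g Ω) (hI : I ∈ SpH) (hL : L ∈ SpH) {A : ℍ[ℝ]} (hA : A ≠ 0)
    (hxy : (x : ℍ[ℝ]) + y • L ∈ Ω) :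
    A * (2 * g (A⁻¹ * (x + y • L) * A)) =
      A * (g (x + y • I) + g (x + y • -I)) + L * A * I * (g (x + y • -I) - g (x + y • I)) := by
  have hL' := inv_mul_mul_mem_spH hL hA
  have hconj : A⁻¹ * ((x : ℍ[ℝ]) + y • L) * A = x + y • (A⁻¹ * L * A) := by
    rw [mul_add, add_mul, mul_smul_comm, smul_mul_assoc, ← Quaternion.coe_commutes, mul_assoc,
      inv_mul_cancel₀ hA, mul_one]
  have hAL : A * (A⁻¹ * L * A) = L * A := by
    rw [← mul_assoc, ← mul_assoc, mul_inv_cancel₀ hA, one_mul]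
  rw [hconj, hg.two_mul_apply_eq hΩ hax hI hL' (hax x y L hL hxy _ hL'), ← hAL]
  noncomm_ring

end RegularProduct

theorem zeros_of_product_general
    (Ω : Set ℍ[ℝ]) (hΩ : IsSDomain Ω) (hax : AxSymm Ω)
    (f g : ℍ[ℝ] → ℍ[ℝ]) (hf : SliceRegularOn f Ω) (hg : SliceRegularOn g Ω)
    (I J : ℍ[ℝ]) (hI : I ∈ SpH) (hJ : J ∈ SpH) (hperp : (I * star J).re = 0)
    (F G H K : ℍ[ℝ] → ℍ[ℝ])
    (hFm : Set.MapsTo F (Ω ∩ sliceL I) (sliceL I))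
    (hGm : Set.MapsTo G (Ω ∩ sliceL I) (sliceL I))
    (hHm : Set.MapsTo H (Ω ∩ sliceL I) (sliceL I))
    (hKm : Set.MapsTo K (Ω ∩ sliceL I) (sliceL I))
    (hfs : ∀ z ∈ Ω ∩ sliceL I, f z = F z + G z * J)
    (hgs : ∀ z ∈ Ω ∩ sliceL I, g z = H z + K z * J)
    -- `fg` is the regular product `f ∗ g`
    (fg : ℍ[ℝ] → ℍ[ℝ]) (hfgreg : SliceRegularOn fg Ω)
    (hfg : ∀ z ∈ Ω ∩ sliceL I, fg z =
      (F z * H z - G z * star (K (star z))) +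
        (F z * K z + G z * star (H (star z))) * J) :
    ∀ q ∈ Ω, (fg q = 0 ↔ f q = 0 ∨ (f q ≠ 0 ∧ g ((f q)⁻¹ * q * f q) = 0)) := by
  have hslice : ∀ z ∈ Ω ∩ sliceL I,
      2 * fg z = f z * (g z + g (star z)) + I * f z * I * (g (star z) - g z) := by
    intro z hz
    have hz' := star_mem_of_axSymm hax hI hz
    rw [hfg z hz, hfs z hz, hgs z hz, hgs _ hz']
    exact two_mul_regularProduct_eq hI hJ (mul_eq_neg_mul_of_re_mul_star_eq_zero hI hJ hperp)
      (hFm hz) (hGm hz) (hHm hz') (hKm hz')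
  intro q hq
  obtain ⟨x, y, L, hL, rfl⟩ := exists_eq_coe_add_smul hI q
  have key := two_mul_apply_eq_of_forall_mem_sliceL hΩ hax hf hfgreg hI hL hslice hq
  rcases eq_or_ne (f (x + y • L)) 0 with hf0 | hf0
  · simpa [hf0, two_ne_zero] using key
  · rw [← mul_two_mul_apply_inv_mul_mul hΩ hax hg hI hL hf0 hq] at key
    rw [← mul_eq_zero_iff_left two_ne_zero, key, mul_eq_zero_iff_left hf0,
      mul_eq_zero_iff_left two_ne_zero]
    simp [hf0]

/-- Zeros of the regular product. -/
theorem zeros_of_product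
    (Ω : Set ℍ[ℝ]) (hΩ : IsSDomain Ω) (hax : AxSymm Ω)
    (f g : ℍ[ℝ] → ℍ[ℝ]) (hf : SliceRegularOn f Ω) (hg : SliceRegularOn g Ω)
    (I J : ℍ[ℝ]) (hI : I ∈ SpH) (hJ : J ∈ SpH) (hperp : (I * star J).re = 0)
    (F G H K : ℍ[ℝ] → ℍ[ℝ])
    (hF : SliceHolomorphicOn I F (Ω ∩ sliceL I)) (hFm : Set.MapsTo F (Ω ∩ sliceL I) (sliceL I))
    (hG : SliceHolomorphicOn I G (Ω ∩ sliceL I)) (hGm : Set.MapsTo G (Ω ∩ sliceL I) (sliceL I))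
    (hH : SliceHolomorphicOn I H (Ω ∩ sliceL I)) (hHm : Set.MapsTo H (Ω ∩ sliceL I) (sliceL I))
    (hK : SliceHolomorphicOn I K (Ω ∩ sliceL I)) (hKm : Set.MapsTo K (Ω ∩ sliceL I) (sliceL I))
    (hfs : ∀ z ∈ Ω ∩ sliceL I, f z = F z + G z * J)
    (hgs : ∀ z ∈ Ω ∩ sliceL I, g z = H z + K z * J)
    -- `fg` is the regular product `f ∗ g`
    (fg : ℍ[ℝ] → ℍ[ℝ]) (hfgreg : SliceRegularOn fg Ω)
    (hfg : ∀ z ∈ Ω ∩ sliceL I, fg z =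
      (F z * H z - G z * star (K (star z))) +
        (F z * K z + G z * star (H (star z))) * J) :
    ∀ q ∈ Ω, (fg q = 0 ↔ f q = 0 ∨ (f q ≠ 0 ∧ g ((f q)⁻¹ * q * f q) = 0)) :=
  zeros_of_product_general Ω hΩ hax f g hf hg I J hI hJ hperp F G H K hFm hGm hHm hKm hfs hgs fg
    hfgreg hfg
end
end

section
/- Fix s ∈ ℍ. The function g : ℍ ∖ Z → ℍ defined by g(q) = (q² − 2·Re(s)·q + |s|²)⁻¹·(q − conj(s)), where Z = {q ∈ ℍ : q² − 2·Re(s)·q + |s|² = 0}, is slice regular on ℍ ∖ Z (note q² − 2·Re(s)·q + |s|² is real-valued in the appropriate sense: it has real coefficients, so it commutes with the second factor on each slice). -/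
open Quaternion

noncomputable section

/-!
On the slice `L_I` the map `φ : x + y i ↦ x + y I` is an `ℝ`-algebra embedding of `ℂ`. The
quadratic `q² - 2 Re(s) q + |s|²` has real coefficients, so it is `φ ∘ P ∘ φ⁻¹` for the complex
quadratic `P`, and the kernel restricted to `L_I` is `φ (P(z)⁻¹ z) - φ (P(z)⁻¹) · conj s`: each term
is a holomorphic function on `{P ≠ 0}` carried to `L_I` by `φ` and multiplied on the right by a
constant, and such functions satisfy the slice Cauchy–Riemann equation.
-/

theorem mul_self_eq_neg_one_of_mem_SpH {I : ℍ[ℝ]} (hI : I ∈ SpH) : I * I = -1 := by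
  rw [← sq, Quaternion.sq_eq_neg_normSq.mpr hI.1, Quaternion.normSq_eq_norm_mul_self, hI.2,
    mul_one, Quaternion.coe_one]

theorem liftAux_ofReal_add_ofReal_mul_I {I : ℍ[ℝ]} (hI : I * I = -1) (x y : ℝ) :
    Complex.liftAux I hI (x + y * Complex.I) = (x : ℍ[ℝ]) + y • I := by
  simp [Complex.liftAux_apply, Quaternion.algebraMap_def]

theorem SliceHolomorphicOn.sub {I : ℍ[ℝ]} {f g : ℍ[ℝ] → ℍ[ℝ]} {Ω : Set ℍ[ℝ]}
    (hf : SliceHolomorphicOn I f Ω) (hg : SliceHolomorphicOn I g Ω) :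
    SliceHolomorphicOn I (fun q => f q - g q) Ω := by
  obtain ⟨fx, fy, hfx, hfy, hfxc, hfyc, hfCR⟩ := hf
  obtain ⟨gx, gy, hgx, hgy, hgxc, hgyc, hgCR⟩ := hg
  refine ⟨fx - gx, fy - gy, fun x y h => (hfx x y h).sub (hgx x y h),
    fun x y h => (hfy x y h).sub (hgy x y h), hfxc.sub hgxc, hfyc.sub hgyc, fun x y h => ?_⟩
  rw [Pi.sub_apply, Pi.sub_apply, Pi.sub_apply, Pi.sub_apply, mul_sub, sub_add_sub_comm,
    hfCR x y h, hgCR x y h, sub_zero]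

/-- Right multiplication by `c` is `ℝ`-linear and commutes with left multiplication by `I`, so
the Cauchy–Riemann equation of `h` survives the transport to `L_I`. -/
theorem sliceHolomorphicOn_of_comp_liftAux {I : ℍ[ℝ]} (hI : I * I = -1) {f : ℍ[ℝ] → ℍ[ℝ]}
    {Ω : Set ℍ[ℝ]} {h : ℂ → ℂ} {U : Set ℂ} (hU : IsOpen U) (hh : DifferentiableOn ℂ h U)
    (c : ℍ[ℝ]) (hf : ∀ z, f (Complex.liftAux I hI z) = Complex.liftAux I hI (h z) * c)
    (hΩ : ∀ z, Complex.liftAux I hI z ∈ Ω → z ∈ U) :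
    SliceHolomorphicOn I f Ω := by
  set φ := Complex.liftAux I hI
  have hφ := liftAux_ofReal_add_ofReal_mul_I hI
  have hφI : φ Complex.I = I := Complex.liftAux_apply_I I hI
  have hφ_deriv : ∀ {g : ℝ → ℂ} {d : ℂ} {t : ℝ}, HasDerivAt g d t →
      HasDerivAt (fun t => φ (g t) * c) (φ d * c) t := fun hg =>
    ((LinearMap.toContinuousLinearMap φ.toLinearMap).hasFDerivAt.comp_hasDerivAt _ hg).mul_const c
  have hmem : ∀ x y : ℝ, (x : ℍ[ℝ]) + y • I ∈ Ω → (x + y * Complex.I : ℂ) ∈ U := fun x y h =>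
    hΩ _ (by rwa [hφ])
  have hderiv : ∀ x y : ℝ, (x : ℍ[ℝ]) + y • I ∈ Ω →
      HasDerivAt h (deriv h (x + y * Complex.I)) (x + y * Complex.I) := fun x y hxy =>
    (hh.differentiableAt (hU.mem_nhds (hmem x y hxy))).hasDerivAt
  have hcont : ContinuousOn (fun p : ℝ × ℝ => φ (deriv h (p.1 + p.2 * Complex.I)) * c)
      {p : ℝ × ℝ | (p.1 : ℍ[ℝ]) + p.2 • I ∈ Ω} := by
    have hderiv_cont : ContinuousOn (deriv h) U := (hh.analyticOnNhd hU).deriv.continuousOn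
    have hline : Continuous fun p : ℝ × ℝ => (p.1 : ℂ) + p.2 * Complex.I := by fun_prop
    exact (φ.toLinearMap.continuous_of_finiteDimensional.comp_continuousOn
      (hderiv_cont.comp hline.continuousOn fun p hp => hmem p.1 p.2 hp)).mul continuousOn_const
  refine ⟨fun x y => φ (deriv h (x + y * Complex.I)) * c,
    fun x y => I * (φ (deriv h (x + y * Complex.I)) * c), ?_, ?_, ?_, ?_, ?_⟩
  · intro x y hxy
    have hslice : (fun t : ℝ => f ((t : ℍ[ℝ]) + y • I)) =
        fun t : ℝ => φ (h (t + y * Complex.I)) * c :=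
      funext fun t => by rw [← hφ, hf]
    rw [hslice]
    exact hφ_deriv (((hderiv x y hxy).comp_add_const _ _).comp_ofReal (z := x))
  · intro x y hxy
    have hslice : (fun t : ℝ => f ((x : ℍ[ℝ]) + t • I)) =
        fun t : ℝ => φ (h (x + t * Complex.I)) * c :=
      funext fun t => by rw [← hφ, hf]
    have := hφ_deriv (((hderiv x y hxy).comp (y : ℂ)
      ((hasDerivAt_mul_const Complex.I).const_add (x : ℂ))).comp_ofReal (z := y))
    rw [hslice]
    rwa [Function.comp_def, mul_comm (deriv h _), map_mul, hφI, mul_assoc] at this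
  · exact hcont
  · exact continuousOn_const.mul hcont
  · intro x y _
    rw [← mul_assoc, hI, neg_one_mul, add_neg_cancel]

/-- The Cauchy kernel `(q² - 2 Re(s) q + |s|²)⁻¹ (q - conj s)`, the regular reciprocal of
`q ↦ q - s`, is slice regular away from the zeros of `q² - 2 Re(s) q + |s|²`. -/
theorem cauchy_kernel_slice_regular (s : ℍ[ℝ]) :
    SliceRegularOn
      (fun q : ℍ[ℝ] =>
        (q ^ 2 - 2 * (s.re : ℍ[ℝ]) * q + ((Quaternion.normSq s : ℝ) : ℍ[ℝ]))⁻¹ *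
          (q - star s))
      {q : ℍ[ℝ] | q ^ 2 - 2 * (s.re : ℍ[ℝ]) * q + ((Quaternion.normSq s : ℝ) : ℍ[ℝ]) ≠ 0} := by
  intro I hI
  have hI2 := mul_self_eq_neg_one_of_mem_SpH hI
  let P : ℂ → ℂ := fun z => z ^ 2 - 2 * s.re * z + Quaternion.normSq s
  have hφP : ∀ z, Complex.liftAux I hI2 z ^ 2 - 2 * (s.re : ℍ[ℝ]) * Complex.liftAux I hI2 z +
      ((Quaternion.normSq s : ℝ) : ℍ[ℝ]) = Complex.liftAux I hI2 (P z) := by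
    intro z
    simp only [P, map_add, map_sub, map_pow, map_mul, map_ofNat, ← Complex.coe_algebraMap,
      AlgHom.commutes, Quaternion.algebraMap_def]
  have hU : IsOpen {z | P z ≠ 0} := isOpen_ne_fun (by fun_prop) continuous_const
  have hP_inv : DifferentiableOn ℂ (fun z => (P z)⁻¹) {z | P z ≠ 0} :=
    fun z hz => ((by fun_prop : DifferentiableAt ℂ P z).inv hz).differentiableWithinAt
  have hΩ : ∀ z, Complex.liftAux I hI2 z ∈ {q : ℍ[ℝ] | q ^ 2 - 2 * (s.re : ℍ[ℝ]) * q +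
      ((Quaternion.normSq s : ℝ) : ℍ[ℝ]) ≠ 0} → z ∈ {z | P z ≠ 0} :=
    fun z hz hPz => hz (by rw [hφP, hPz, map_zero])
  simp_rw [mul_sub]
  refine SliceHolomorphicOn.sub
    (sliceHolomorphicOn_of_comp_liftAux hI2 hU (hP_inv.mul differentiableOn_id) 1 ?_ hΩ)
    (sliceHolomorphicOn_of_comp_liftAux hI2 hU hP_inv (star s) ?_ hΩ) <;>
  intro z <;> simp only [hφP, Pi.mul_apply, id, map_mul, map_inv₀, mul_one]
end
end
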